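/- For every integer d, let B(d) be the 3×3 matrix with rows ((3d-1)d(4-3d), d^2, 1), (-(3d-2)(3d-1)d, d^2, 0), and ((3d-3)(3d-2)(3d-1), (3d-3)(7d+2), (3d-3)(3d-2)). Then det B(d) = 6 d (d-1)(3d-1)(3d-2)(d^2 - 4d - 1), and det B(d) ≠ 0 for every integer d ≥ 2. -/

import Mathlib

open Matrix

/-- The 3×3 matrix of equations 1133, 1134 and 3344. -/
def B3 (d : ℤ) : Matrix (Fin 3) (Fin 3) ℤ :=
  !![(3*d-1)*d*(4-3*d), d^2, 1;
     -((3*d-2)*(3*d-1)*d), d^2, 0;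
     (3*d-3)*(3*d-2)*(3*d-1), (3*d-3)*(7*d+2), (3*d-3)*(3*d-2)]

theorem det_B3_eq (d : ℤ) :
    (B3 d).det = 6 * d * (d-1) * (3*d-1) * (3*d-2) * (d^2 - 4*d - 1) := by
  simp only [B3, det_fin_three, of_apply, cons_val', cons_val_zero, cons_val_one, cons_val,
    cons_val_fin_one]
  ring

/-- A root would satisfy `d * (d - 4) = 1`, forcing `d = ±1`. -/
theorem sq_sub_four_mul_sub_one_ne_zero (d : ℤ) : d^2 - 4*d - 1 ≠ 0 := by
  intro h
  have hunit : d * (d - 4) = 1 := by linear_combination h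
  rcases Int.eq_one_or_neg_one_of_mul_eq_one hunit with rfl | rfl <;> norm_num at hunit

/-- `det B(d) = 6 d (d-1)(3d-1)(3d-2)(d²-4d-1)`, which is nonzero for every
integer `d ≥ 2`. -/
theorem det_B3 :
    (∀ d : ℤ, (B3 d).det = 6 * d * (d-1) * (3*d-1) * (3*d-2) * (d^2 - 4*d - 1)) ∧
      ∀ d : ℤ, 2 ≤ d → (B3 d).det ≠ 0 := by
  refine ⟨det_B3_eq, fun d hd => ?_⟩
  rw [det_B3_eq]
  refine mul_ne_zero ?_ (sq_sub_four_mul_sub_one_ne_zero d)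
  simp only [ne_eq, mul_eq_zero, not_or]
  omega
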